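/- arXiv:2203.02224 — 8 statements merged into one kernel-verified Lean document; each statement's English description precedes it below -/
import Mathlib

section
/- Let X and L be real inner product spaces, ι : X → L a linear map with ‖ιφ‖_L ≤ ‖φ‖_X for all φ ∈ X, V_h⁰ ⊆ X a complete subspace, and S_h : X → X the orthogonal projection onto V_h⁰. Fix ν > 0, α > 0 and f, u^d ∈ L. Let u, z ∈ X and let g_p, g_λ : X → ℝ be linear functionals such that for all φ ∈ X: ν⟨u,φ⟩_X + g_p(φ) + α^{-1/2}⟨ιz, ιφ⟩_L = ⟨f, ιφ⟩_L and ν⟨φ,z⟩_X + g_λ(φ) − α^{-1/2}⟨ιu, ιφ⟩_L = −α^{-1/2}⟨u^d, ιφ⟩_L. Let u_h, z_h ∈ V_h⁰ satisfy, for all φ_h ∈ V_h⁰: ν⟨u_h,φ_h⟩_X + α^{-1/2}⟨ιz_h, ιφ_h⟩_L = ⟨f, ιφ_h⟩_L and ν⟨φ_h,z_h⟩_X − α^{-1/2}⟨ιu_h, ιφ_h⟩_L = −α^{-1/2}⟨u^d, ιφ_h⟩_L. Suppose C_p, C_λ ≥ 0 satisfy |g_p(φ_h)| ≤ C_p‖φ_h‖_X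 and |g_λ(φ_h)| ≤ C_λ‖φ_h‖_X for all φ_h ∈ V_h⁰. Then (‖S_h u − u_h‖_X² + ‖S_h z − z_h‖_X²)^{1/2} ≤ ν^{-1}(C_p² + C_λ²)^{1/2} + α^{-1/2}ν^{-1}(‖ι(u − S_h u)‖_L² + ‖ι(z − S_h z)‖_L²)^{1/2}. -/
open RealInnerProductSpace

private lemma cs2 (a b c d : ℝ) :
    a * c + b * d ≤ Real.sqrt (a ^ 2 + b ^ 2) * Real.sqrt (c ^ 2 + d ^ 2) := by
  have h3 : (a * c + b * d) ^ 2 ≤ (a ^ 2 + b ^ 2) * (c ^ 2 + d ^ 2) := by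
    nlinarith [sq_nonneg (a * d - b * c)]
  calc a * c + b * d ≤ |a * c + b * d| := le_abs_self _
    _ = Real.sqrt ((a * c + b * d) ^ 2) := (Real.sqrt_sq_eq_abs _).symm
    _ ≤ Real.sqrt ((a ^ 2 + b ^ 2) * (c ^ 2 + d ^ 2)) := Real.sqrt_le_sqrt h3
    _ = _ := Real.sqrt_mul (by positivity) _

set_option maxHeartbeats 800000 in
/-- A priori error estimate for the classical (non-pressure-robust) discretization
of the Stokes optimal control problem, abstract Hilbert space form. -/
theorem classical_apriori_estimate
    {X L : Type*} [NormedAddCommGroup X] [InnerProductSpace ℝ X]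
    [NormedAddCommGroup L] [InnerProductSpace ℝ L]
    (ι : X →ₗ[ℝ] L) (hι : ∀ φ : X, ‖ι φ‖ ≤ ‖φ‖)
    (V : Submodule ℝ X) [CompleteSpace V]
    (ν α : ℝ) (hν : 0 < ν) (hα : 0 < α)
    (f ud : L) (u z : X) (gp gl : X →ₗ[ℝ] ℝ)
    (hu : ∀ φ : X,
      ν * ⟪u, φ⟫ + gp φ + (Real.sqrt α)⁻¹ * ⟪ι z, ι φ⟫ = ⟪f, ι φ⟫)
    (hz : ∀ φ : X,
      ν * ⟪φ, z⟫ + gl φ - (Real.sqrt α)⁻¹ * ⟪ι u, ι φ⟫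
        = -(Real.sqrt α)⁻¹ * ⟪ud, ι φ⟫)
    (uh zh : X) (huhV : uh ∈ V) (hzhV : zh ∈ V)
    (huh : ∀ φh ∈ V,
      ν * ⟪uh, φh⟫ + (Real.sqrt α)⁻¹ * ⟪ι zh, ι φh⟫ = ⟪f, ι φh⟫)
    (hzh : ∀ φh ∈ V,
      ν * ⟪φh, zh⟫ - (Real.sqrt α)⁻¹ * ⟪ι uh, ι φh⟫
        = -(Real.sqrt α)⁻¹ * ⟪ud, ι φh⟫)
    (Cp Cl : ℝ) (hCp0 : 0 ≤ Cp) (hCl0 : 0 ≤ Cl)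
    (hCp : ∀ φh ∈ V, |gp φh| ≤ Cp * ‖φh‖)
    (hCl : ∀ φh ∈ V, |gl φh| ≤ Cl * ‖φh‖) :
    Real.sqrt (‖(V.orthogonalProjection u : X) - uh‖ ^ 2
        + ‖(V.orthogonalProjection z : X) - zh‖ ^ 2)
      ≤ ν⁻¹ * Real.sqrt (Cp ^ 2 + Cl ^ 2)
        + (Real.sqrt α)⁻¹ * ν⁻¹ *
          Real.sqrt (‖ι (u - (V.orthogonalProjection u : X))‖ ^ 2
            + ‖ι (z - (V.orthogonalProjection z : X))‖ ^ 2) := by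
  set s : ℝ := (Real.sqrt α)⁻¹ with hs
  have hs0 : 0 ≤ s := inv_nonneg.2 (Real.sqrt_nonneg α)
  set Su : X := (V.orthogonalProjection u : X) with hSudef
  set Sz : X := (V.orthogonalProjection z : X) with hSzdef
  set eu : X := Su - uh with heudef
  set ez : X := Sz - zh with hezdef
  have hSuV : Su ∈ V := (V.orthogonalProjection u).2
  have hSzV : Sz ∈ V := (V.orthogonalProjection z).2
  have heuV : eu ∈ V := V.sub_mem hSuV huhV
  have hezV : ez ∈ V := V.sub_mem hSzV hzhV
  have hpu : ⟪u - Su, eu⟫ = 0 := V.starProjection_inner_eq_zero u eu heuV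
  have hpz : ⟪z - Sz, ez⟫ = 0 := V.starProjection_inner_eq_zero z ez hezV
  -- expansions
  have E1 : ⟪u, eu⟫ = ⟪uh, eu⟫ + ⟪eu, eu⟫ := by
    have h0 : u - Su = u - uh - eu := by rw [heudef]; abel
    rw [h0] at hpu
    simp only [inner_sub_left] at hpu
    linarith
  have E3 : ⟪ez, z⟫ = ⟪ez, zh⟫ + ⟪ez, ez⟫ := by
    have h0 : z - Sz = z - zh - ez := by rw [hezdef]; abel
    rw [h0] at hpz
    rw [real_inner_comm] at hpz
    simp only [inner_sub_right] at hpz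
    linarith
  have E2 : ⟪ι z, ι eu⟫ = ⟪ι zh, ι eu⟫ + ⟪ι ez, ι eu⟫ + ⟪ι (z - Sz), ι eu⟫ := by
    have hm : ι (z - Sz) = ι z - ι zh - ι ez := by
      rw [show z - Sz = z - zh - ez from by rw [hezdef]; abel, map_sub, map_sub]
    rw [hm]
    simp only [inner_sub_left]
    ring
  have E4 : ⟪ι u, ι ez⟫ = ⟪ι uh, ι ez⟫ + ⟪ι eu, ι ez⟫ + ⟪ι (u - Su), ι ez⟫ := by
    have hm : ι (u - Su) = ι u - ι uh - ι eu := by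
      rw [show u - Su = u - uh - eu from by rw [heudef]; abel, map_sub, map_sub]
    rw [hm]
    simp only [inner_sub_left]
    ring
  have H1 := hu eu
  have H2 := huh eu heuV
  have H3 := hz ez
  have H4 := hzh ez hezV
  have h1' : ν * ⟪eu, eu⟫ + gp eu + s * ⟪ι (z - Sz), ι eu⟫ + s * ⟪ι ez, ι eu⟫ = 0 := by
    linear_combination H1 - H2 - ν * E1 - s * E2
  have h2' : ν * ⟪ez, ez⟫ + gl ez - s * ⟪ι (u - Su), ι ez⟫ - s * ⟪ι eu, ι ez⟫ = 0 := by
    linear_combination H3 - H4 - ν * E3 + s * E4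
  have hcomm : ⟪ι ez, ι eu⟫ = ⟪ι eu, ι ez⟫ := real_inner_comm _ _
  have hnu : ⟪eu, eu⟫ = ‖eu‖ ^ 2 := real_inner_self_eq_norm_sq eu
  have hnz : ⟪ez, ez⟫ = ‖ez‖ ^ 2 := real_inner_self_eq_norm_sq ez
  have key : ν * (‖eu‖ ^ 2 + ‖ez‖ ^ 2)
      = -(gp eu) - gl ez - s * ⟪ι (z - Sz), ι eu⟫ + s * ⟪ι (u - Su), ι ez⟫ := by
    linear_combination h1' + h2' - s * hcomm - ν * hnu - ν * hnz
  -- bounds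
  set Au : ℝ := ‖ι (u - Su)‖ with hAu
  set Az : ℝ := ‖ι (z - Sz)‖ with hAz
  have bgp : -(gp eu) ≤ Cp * ‖eu‖ := (neg_le_abs _).trans (hCp eu heuV)
  have bgl : -(gl ez) ≤ Cl * ‖ez‖ := (neg_le_abs _).trans (hCl ez hezV)
  have cb1 : -⟪ι (z - Sz), ι eu⟫ ≤ Az * ‖eu‖ := by
    have h1 := abs_real_inner_le_norm (ι (z - Sz)) (ι eu)
    have h2 := hι eu
    have h3 : 0 ≤ Az := norm_nonneg _
    nlinarith [neg_le_abs ⟪ι (z - Sz), ι eu⟫]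
  have cb2 : ⟪ι (u - Su), ι ez⟫ ≤ Au * ‖ez‖ := by
    have h1 := abs_real_inner_le_norm (ι (u - Su)) (ι ez)
    have h2 := hι ez
    have h3 : 0 ≤ Au := norm_nonneg _
    nlinarith [le_abs_self ⟪ι (u - Su), ι ez⟫]
  have big : ν * (‖eu‖ ^ 2 + ‖ez‖ ^ 2)
      ≤ (Cp * ‖eu‖ + Cl * ‖ez‖) + s * (Az * ‖eu‖ + Au * ‖ez‖) := by
    have t1 := mul_le_mul_of_nonneg_left cb1 hs0
    have t2 := mul_le_mul_of_nonneg_left cb2 hs0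
    rw [key]; linarith
  -- Cauchy–Schwarz in ℝ²
  set P : ℝ := ‖eu‖ ^ 2 + ‖ez‖ ^ 2 with hPdef
  have hP0 : 0 ≤ P := by positivity
  have csC : Cp * ‖eu‖ + Cl * ‖ez‖ ≤ Real.sqrt (Cp ^ 2 + Cl ^ 2) * Real.sqrt P := by
    simpa [hPdef] using cs2 Cp Cl ‖eu‖ ‖ez‖
  have csA : Az * ‖eu‖ + Au * ‖ez‖ ≤ Real.sqrt (Au ^ 2 + Az ^ 2) * Real.sqrt P := by
    have := cs2 Au Az ‖ez‖ ‖eu‖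
    rw [show ‖ez‖ ^ 2 + ‖eu‖ ^ 2 = P from by rw [hPdef]; ring] at this
    linarith
  set K : ℝ := Real.sqrt (Cp ^ 2 + Cl ^ 2) + s * Real.sqrt (Au ^ 2 + Az ^ 2) with hK
  have hK0 : 0 ≤ K := by positivity
  have hfin : ν * Real.sqrt P ≤ K := by
    rcases eq_or_lt_of_le (Real.sqrt_nonneg P) with h | h
    · rw [← h, mul_zero]; exact hK0
    · have hPeq : Real.sqrt P * Real.sqrt P = P := Real.mul_self_sqrt hP0
      have hstep : ν * Real.sqrt P * Real.sqrt P ≤ K * Real.sqrt P := by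
        have t2 := mul_le_mul_of_nonneg_left csA hs0
        have hq : ν * Real.sqrt P * Real.sqrt P = ν * P := by rw [mul_assoc, hPeq]
        have hKr : K * Real.sqrt P = Real.sqrt (Cp ^ 2 + Cl ^ 2) * Real.sqrt P
            + s * (Real.sqrt (Au ^ 2 + Az ^ 2) * Real.sqrt P) := by rw [hK]; ring
        rw [hq, hKr]; linarith
      exact le_of_mul_le_mul_right hstep h
  calc Real.sqrt P ≤ K / ν := by
        rw [le_div_iff₀ hν]; linarith
    _ = ν⁻¹ * Real.sqrt (Cp ^ 2 + Cl ^ 2)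
        + s * ν⁻¹ * Real.sqrt (Au ^ 2 + Az ^ 2) := by rw [hK]; field_simp
end

section
/- Let X and L be real inner product spaces, ι : X → L and Π : X → L linear maps, V_h⁰ ⊆ X a complete subspace, and S_h : X → X the orthogonal projection onto V_h⁰. Fix ν > 0, α > 0 and f, u^d ∈ L. Let u, z ∈ X and Du, Dz ∈ L satisfy ⟨u,φ⟩_X = −⟨Du, ιφ⟩_L and ⟨z,φ⟩_X = −⟨Dz, ιφ⟩_L for all φ ∈ X, and assume for all φ_h ∈ V_h⁰: ⟨f, Πφ_h⟩_L = −ν⟨Du, Πφ_h⟩_L + α^{-1/2}⟨ιz, Πφ_h⟩_L and α^{-1/2}⟨ιu − u^d, Πφ_h⟩_L = −ν⟨Dz, Πφ_h⟩_L. Let u_h, z_h ∈ V_h⁰ satisfy, for all φ_h ∈ V_h⁰: ν⟨u_h,φ_h⟩_X = ⟨f − α^{-1/2}Πz_h, Πφ_h⟩_L and ν⟨φ_h,z_h⟩_X = α^{-1/2}⟨Πu_h − u^d, Πφ_h⟩_L. Suppose C_u, C_z, C'_u, C'_z ≥ 0 satisfy, for all φ_h ∈ V_h⁰: |⟨Du,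 ιφ_h − Πφ_h⟩_L| ≤ C_u‖φ_h‖_X, |⟨Dz, ιφ_h − Πφ_h⟩_L| ≤ C_z‖φ_h‖_X, |⟨ιu − Π(S_h u), Πφ_h⟩_L| ≤ C'_u‖φ_h‖_X, and |⟨ιz − Π(S_h z), Πφ_h⟩_L| ≤ C'_z‖φ_h‖_X. Then (‖S_h u − u_h‖_X² + ‖S_h z − z_h‖_X²)^{1/2} ≤ (C_u² + C_z²)^{1/2} + ν^{-1}α^{-1/2}(C'_u² + C'_z²)^{1/2}. -/
open RealInnerProductSpace

/-- Cauchy–Schwarz in ℝ²: auxiliary lemma. -/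
lemma cs2_aux (a b x y : ℝ) :
    a*x + b*y ≤ Real.sqrt (a^2+b^2) * Real.sqrt (x^2+y^2) := by
  have h1 := Real.sq_sqrt (by positivity : (0:ℝ) ≤ a^2+b^2)
  have h2 := Real.sq_sqrt (by positivity : (0:ℝ) ≤ x^2+y^2)
  have h3 := Real.sqrt_nonneg (a^2+b^2)
  have h4 := Real.sqrt_nonneg (x^2+y^2)
  nlinarith [sq_nonneg (a*y - b*x),
    sq_nonneg (Real.sqrt (a^2+b^2) * Real.sqrt (x^2+y^2) - a*x - b*y),
    mul_nonneg h3 h4]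

/-- A priori error estimate for the fully pressure-robust discretization
of the Stokes optimal control problem, abstract Hilbert space form. -/
theorem robust_apriori_estimate
    {X L : Type*} [NormedAddCommGroup X] [InnerProductSpace ℝ X]
    [NormedAddCommGroup L] [InnerProductSpace ℝ L]
    (ι : X →ₗ[ℝ] L) (Pi : X →ₗ[ℝ] L)
    (V : Submodule ℝ X) [CompleteSpace V]
    (ν α : ℝ) (hν : 0 < ν) (hα : 0 < α)
    (f ud : L) (u z : X) (Du Dz : L)
    (hDu : ∀ φ : X, ⟪u, φ⟫ = -⟪Du, ι φ⟫)
    (hDz : ∀ φ : X, ⟪z, φ⟫ = -⟪Dz, ι φ⟫)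
    (hf : ∀ φh ∈ V,
      ⟪f, Pi φh⟫ = -(ν * ⟪Du, Pi φh⟫) + (Real.sqrt α)⁻¹ * ⟪ι z, Pi φh⟫)
    (hud : ∀ φh ∈ V,
      (Real.sqrt α)⁻¹ * ⟪ι u - ud, Pi φh⟫ = -(ν * ⟪Dz, Pi φh⟫))
    (uh zh : X) (huhV : uh ∈ V) (hzhV : zh ∈ V)
    (huh : ∀ φh ∈ V,
      ν * ⟪uh, φh⟫ = ⟪f - (Real.sqrt α)⁻¹ • Pi zh, Pi φh⟫)
    (hzh : ∀ φh ∈ V,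
      ν * ⟪φh, zh⟫ = (Real.sqrt α)⁻¹ * ⟪Pi uh - ud, Pi φh⟫)
    (Cu Cz Cu' Cz' : ℝ)
    (hCu0 : 0 ≤ Cu) (hCz0 : 0 ≤ Cz) (hCu'0 : 0 ≤ Cu') (hCz'0 : 0 ≤ Cz')
    (hCu : ∀ φh ∈ V, |⟪Du, ι φh - Pi φh⟫| ≤ Cu * ‖φh‖)
    (hCz : ∀ φh ∈ V, |⟪Dz, ι φh - Pi φh⟫| ≤ Cz * ‖φh‖)
    (hCu' : ∀ φh ∈ V,
      |⟪ι u - Pi (Submodule.orthogonalProjectionOnto V u : X), Pi φh⟫| ≤ Cu' * ‖φh‖)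
    (hCz' : ∀ φh ∈ V,
      |⟪ι z - Pi (Submodule.orthogonalProjectionOnto V z : X), Pi φh⟫| ≤ Cz' * ‖φh‖) :
    Real.sqrt (‖(Submodule.orthogonalProjectionOnto V u : X) - uh‖ ^ 2
        + ‖(Submodule.orthogonalProjectionOnto V z : X) - zh‖ ^ 2)
      ≤ Real.sqrt (Cu ^ 2 + Cz ^ 2)
        + ν⁻¹ * (Real.sqrt α)⁻¹ * Real.sqrt (Cu' ^ 2 + Cz' ^ 2) := by
  set s : ℝ := (Real.sqrt α)⁻¹ with hs
  have hs0 : 0 < s := inv_pos.2 (Real.sqrt_pos.2 hα)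
  set Pu : X := (Submodule.orthogonalProjectionOnto V u : X) with hPu
  set Pz : X := (Submodule.orthogonalProjectionOnto V z : X) with hPz
  set eu : X := Pu - uh with heu
  set ez : X := Pz - zh with hez
  have heuV : eu ∈ V := sub_mem (Submodule.coe_mem _) huhV
  have hezV : ez ∈ V := sub_mem (Submodule.coe_mem _) hzhV
  -- orthogonality of the projection
  have hpu : ⟪Pu, eu⟫ = ⟪u, eu⟫ := by
    have h : ⟪u - Pu, eu⟫ = 0 := V.starProjection_inner_eq_zero u eu heuV
    rw [inner_sub_left] at h
    linarith
  have hpz : ⟪ez, Pz⟫ = ⟪ez, z⟫ := by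
    have h : ⟪z - Pz, ez⟫ = 0 := V.starProjection_inner_eq_zero z ez hezV
    rw [inner_sub_left] at h
    have c1 := real_inner_comm ez Pz
    have c2 := real_inner_comm ez z
    linarith
  -- error equation for eu
  have A : ν * ⟪eu, eu⟫ = -(ν * ⟪Du, ι eu - Pi eu⟫)
      - s * ⟪ι z - Pi Pz, Pi eu⟫ - s * ⟪Pi ez, Pi eu⟫ := by
    have h1 := huh eu heuV
    have h2 := hf eu heuV
    have h3 := hDu eu
    rw [inner_sub_left, real_inner_smul_left] at h1
    have h4 : ⟪eu, eu⟫ = ⟪Pu, eu⟫ - ⟪uh, eu⟫ := by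
      nth_rewrite 1 [heu]; rw [inner_sub_left]
    have h5 : ⟪Pi ez, Pi eu⟫ = ⟪Pi Pz, Pi eu⟫ - ⟪Pi zh, Pi eu⟫ := by
      rw [hez, map_sub, inner_sub_left]
    rw [inner_sub_left (𝕜 := ℝ) (ι z), inner_sub_right (𝕜 := ℝ) Du]
    linear_combination ν*h4 + ν*hpu + ν*h3 - h1 - h2 + s*h5
  -- error equation for ez
  have B : ν * ⟪ez, ez⟫ = -(ν * ⟪Dz, ι ez - Pi ez⟫)
      + s * ⟪ι u - Pi Pu, Pi ez⟫ + s * ⟪Pi eu, Pi ez⟫ := by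
    have h1 := hzh ez hezV
    have h2 := hud ez hezV
    have h3 := hDz ez
    have c := real_inner_comm ez z
    rw [inner_sub_left (𝕜 := ℝ) (Pi uh) ud (Pi ez)] at h1
    rw [inner_sub_left] at h2
    have h4 : ⟪ez, ez⟫ = ⟪ez, Pz⟫ - ⟪ez, zh⟫ := by
      nth_rewrite 2 [hez]; rw [inner_sub_right]
    have h5 : ⟪Pi eu, Pi ez⟫ = ⟪Pi Pu, Pi ez⟫ - ⟪Pi uh, Pi ez⟫ := by
      rw [heu, map_sub, inner_sub_left]
    rw [inner_sub_left (𝕜 := ℝ) (ι u), inner_sub_right (𝕜 := ℝ) Dz]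
    linear_combination ν*h4 + ν*hpz - ν*c + ν*h3 - h1 - h2 - s*h5
  -- combined energy identity
  have key : ν * (⟪eu, eu⟫ + ⟪ez, ez⟫)
      = -(ν * ⟪Du, ι eu - Pi eu⟫) - (ν * ⟪Dz, ι ez - Pi ez⟫)
        - s * ⟪ι z - Pi Pz, Pi eu⟫ + s * ⟪ι u - Pi Pu, Pi ez⟫ := by
    have c := real_inner_comm (Pi ez) (Pi eu)
    linear_combination A + B + s*c
  have nu2 : ⟪eu, eu⟫ = ‖eu‖^2 := real_inner_self_eq_norm_sq eu
  have nz2 : ⟪ez, ez⟫ = ‖ez‖^2 := real_inner_self_eq_norm_sq ez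
  -- bound the right-hand side
  have b1 := abs_le.1 (hCu eu heuV)
  have b2 := abs_le.1 (hCz ez hezV)
  have b3 := abs_le.1 (hCz' eu heuV)
  have b4 := abs_le.1 (hCu' ez hezV)
  have t1 : ν * (-(⟪Du, ι eu - Pi eu⟫)) ≤ ν * (Cu * ‖eu‖) :=
    mul_le_mul_of_nonneg_left (by linarith [b1.1]) hν.le
  have t2 : ν * (-(⟪Dz, ι ez - Pi ez⟫)) ≤ ν * (Cz * ‖ez‖) :=
    mul_le_mul_of_nonneg_left (by linarith [b2.1]) hν.le
  have t3 : s * (-(⟪ι z - Pi Pz, Pi eu⟫)) ≤ s * (Cz' * ‖eu‖) :=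
    mul_le_mul_of_nonneg_left (by linarith [b3.1]) hs0.le
  have t4 : s * ⟪ι u - Pi Pu, Pi ez⟫ ≤ s * (Cu' * ‖ez‖) :=
    mul_le_mul_of_nonneg_left b4.2 hs0.le
  have main : ν * (‖eu‖^2 + ‖ez‖^2)
      ≤ ν * (Cu * ‖eu‖ + Cz * ‖ez‖) + s * (Cz' * ‖eu‖ + Cu' * ‖ez‖) := by
    have := key
    rw [nu2, nz2] at this
    nlinarith [t1, t2, t3, t4]
  -- Cauchy–Schwarz in ℝ²
  set E : ℝ := Real.sqrt (‖eu‖^2 + ‖ez‖^2) with hE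
  have hE0 : 0 ≤ E := Real.sqrt_nonneg _
  have hE2 : E^2 = ‖eu‖^2 + ‖ez‖^2 := Real.sq_sqrt (by positivity)
  have c1 : Cu * ‖eu‖ + Cz * ‖ez‖ ≤ Real.sqrt (Cu^2 + Cz^2) * E :=
    cs2_aux Cu Cz ‖eu‖ ‖ez‖
  have c2 : Cz' * ‖eu‖ + Cu' * ‖ez‖ ≤ Real.sqrt (Cu'^2 + Cz'^2) * E := by
    have := cs2_aux Cz' Cu' ‖eu‖ ‖ez‖
    rwa [add_comm (Cz'^2) (Cu'^2)] at this
  set Q : ℝ := Real.sqrt (Cu^2 + Cz^2) with hQ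
  set Q' : ℝ := Real.sqrt (Cu'^2 + Cz'^2) with hQ'
  have hQ0 : 0 ≤ Q := Real.sqrt_nonneg _
  have hQ'0 : 0 ≤ Q' := Real.sqrt_nonneg _
  -- ν E² ≤ ν Q E + s Q' E
  have step : ν * E^2 ≤ ν * (Q * E) + s * (Q' * E) := by
    rw [hE2]
    have m1 : ν * (Cu * ‖eu‖ + Cz * ‖ez‖) ≤ ν * (Q * E) :=
      mul_le_mul_of_nonneg_left c1 hν.le
    have m2 : s * (Cz' * ‖eu‖ + Cu' * ‖ez‖) ≤ s * (Q' * E) :=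
      mul_le_mul_of_nonneg_left c2 hs0.le
    linarith [main]
  show E ≤ Q + ν⁻¹ * s * Q'
  clear_value E Q Q' s Pu Pz eu ez
  rcases eq_or_lt_of_le hE0 with h0 | hEpos
  · rw [← h0]
    positivity
  · have hnuE : ν * E ≤ ν * Q + s * Q' := by
      have h' : (ν * E) * E ≤ (ν * Q + s * Q') * E := by
        calc (ν * E) * E = ν * E^2 := by ring
          _ ≤ ν * (Q * E) + s * (Q' * E) := step
          _ = (ν * Q + s * Q') * E := by ring
      exact le_of_mul_le_mul_right h' hEpos
    have hcancel : ν * (Q + ν⁻¹ * s * Q') = ν * Q + s * Q' := by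
      field_simp
    have hfin : ν * E ≤ ν * (Q + ν⁻¹ * s * Q') := by
      rw [hcancel]; exact hnuE
    exact le_of_mul_le_mul_left hfin hν
end

section
/- Let X and L be real inner product spaces, ι : X → L a linear map, V_h⁰ ⊆ X a complete subspace, and S_h : X → X the orthogonal projection onto V_h⁰. Fix ν > 0, α > 0 and u^d ∈ L. Let u, z ∈ X and let g_λ : X → ℝ be a linear functional such that ν⟨φ,z⟩_X + g_λ(φ) − α^{-1/2}⟨ιu, ιφ⟩_L = −α^{-1/2}⟨u^d, ιφ⟩_L for all φ ∈ X, and let u_h, z_h ∈ V_h⁰ satisfy ν⟨φ_h,z_h⟩_X − α^{-1/2}⟨ιu_h, ιφ_h⟩_L = −α^{-1/2}⟨u^d, ιφ_h⟩_L for all φ_h ∈ V_h⁰. Then, with e_z := S_h z − z_h, it holds ν‖e_z‖_X² = α^{-1/2}⟨ι(u − u_h), ιe_z⟩_L − g_λ(e_z). -/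
open RealInnerProductSpace

/-- Adjoint error identity in the proof of the a priori estimate for the
classical discretization of the Stokes optimal control problem. -/
theorem classical_adjoint_error_identity
    {X L : Type*} [NormedAddCommGroup X] [InnerProductSpace ℝ X]
    [NormedAddCommGroup L] [InnerProductSpace ℝ L]
    (ι : X →ₗ[ℝ] L)
    (V : Submodule ℝ X) [CompleteSpace V]
    (ν α : ℝ) (hν : 0 < ν) (hα : 0 < α)
    (ud : L) (u z : X) (gl : X →ₗ[ℝ] ℝ)
    (hz : ∀ φ : X,
      ν * ⟪φ, z⟫ + gl φ - (Real.sqrt α)⁻¹ * ⟪ι u, ι φ⟫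
        = -(Real.sqrt α)⁻¹ * ⟪ud, ι φ⟫)
    (uh zh : X) (huhV : uh ∈ V) (hzhV : zh ∈ V)
    (hzh : ∀ φh ∈ V,
      ν * ⟪φh, zh⟫ - (Real.sqrt α)⁻¹ * ⟪ι uh, ι φh⟫
        = -(Real.sqrt α)⁻¹ * ⟪ud, ι φh⟫) :
    ν * ‖(V.orthogonalProjectionOnto z : X) - zh‖ ^ 2
      = (Real.sqrt α)⁻¹ * ⟪ι (u - uh), ι ((V.orthogonalProjectionOnto z : X) - zh)⟫
        - gl ((V.orthogonalProjectionOnto z : X) - zh) := by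
  set e : X := (V.orthogonalProjectionOnto z : X) - zh with he
  have heV : e ∈ V := sub_mem (V.orthogonalProjectionOnto z).2 hzhV
  -- orthogonality: ⟪e, z - Pz⟫ = 0
  have horth : ⟪e, z - (V.orthogonalProjectionOnto z : X)⟫ = 0 := by
    rw [real_inner_comm]
    exact Submodule.starProjection_inner_eq_zero (K := V) z e heV
  have hPz : ⟪e, (V.orthogonalProjectionOnto z : X)⟫ = ⟪e, z⟫ := by
    have := inner_sub_right (𝕜 := ℝ) e z (V.orthogonalProjectionOnto z : X)
    have h0 : ⟪e, z⟫ - ⟪e, (V.orthogonalProjectionOnto z : X)⟫ = 0 := by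
      rw [← this]; exact horth
    linarith
  have hnorm : ‖e‖ ^ 2 = ⟪e, e⟫ := (real_inner_self_eq_norm_sq e).symm
  have h1 := hz e
  have h2 := hzh e heV
  have hee : ⟪e, e⟫ = ⟪e, z⟫ - ⟪e, zh⟫ := by
    rw [he]; rw [inner_sub_right, hPz]
  have hlin : ⟪ι (u - uh), ι e⟫ = ⟪ι u, ι e⟫ - ⟪ι uh, ι e⟫ := by
    rw [map_sub, inner_sub_left]
  rw [hnorm, hee, hlin]
  nlinarith [h1, h2]
end

section
/- Let X and L be real inner product spaces, ι : X → L and Π : X → L linear maps, V_h⁰ ⊆ X a complete subspace, and S_h : X → X the orthogonal projection onto V_h⁰. Fix ν > 0, α > 0 and f ∈ L. Let u, z ∈ X and Du ∈ L satisfy ⟨u,φ⟩_X = −⟨Du, ιφ⟩_L for all φ ∈ X and ⟨f, Πφ_h⟩_L = −ν⟨Du, Πφ_h⟩_L + α^{-1/2}⟨ιz, Πφ_h⟩_L for all φ_h ∈ V_h⁰, and let u_h, z_h ∈ V_h⁰ satisfy ν⟨u_h,φ_h⟩_X = ⟨f − α^{-1/2}Πz_h, Πφ_h⟩_L for all φ_h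 ∈ V_h⁰. Then, with e_u := S_h u − u_h, it holds ν‖e_u‖_X² = −ν⟨Du, ιe_u − Πe_u⟩_L − α^{-1/2}⟨ιz − Πz_h, Πe_u⟩_L. -/
open RealInnerProductSpace

/-- Primal error identity in the proof of the a priori estimate for the fully
pressure-robust discretization of the Stokes optimal control problem. -/
theorem robust_primal_error_identity
    {X L : Type*} [NormedAddCommGroup X] [InnerProductSpace ℝ X]
    [NormedAddCommGroup L] [InnerProductSpace ℝ L]
    (ι : X →ₗ[ℝ] L) (Pi : X →ₗ[ℝ] L)
    (V : Submodule ℝ X) [CompleteSpace V]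
    (ν α : ℝ) (hν : 0 < ν) (hα : 0 < α)
    (f : L) (u z : X) (Du : L)
    (hDu : ∀ φ : X, ⟪u, φ⟫ = -⟪Du, ι φ⟫)
    (hf : ∀ φh ∈ V,
      ⟪f, Pi φh⟫ = -(ν * ⟪Du, Pi φh⟫) + (Real.sqrt α)⁻¹ * ⟪ι z, Pi φh⟫)
    (uh zh : X) (huhV : uh ∈ V) (hzhV : zh ∈ V)
    (huh : ∀ φh ∈ V,
      ν * ⟪uh, φh⟫ = ⟪f - (Real.sqrt α)⁻¹ • Pi zh, Pi φh⟫) :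
    ν * ‖(Submodule.orthogonalProjectionOnto V u : X) - uh‖ ^ 2
      = -(ν * ⟪Du, ι ((Submodule.orthogonalProjectionOnto V u : X) - uh)
            - Pi ((Submodule.orthogonalProjectionOnto V u : X) - uh)⟫)
        - (Real.sqrt α)⁻¹ * ⟪ι z - Pi zh, Pi ((Submodule.orthogonalProjectionOnto V u : X) - uh)⟫ := by
  set Su : X := (Submodule.orthogonalProjectionOnto V u : X) with hSu
  set e : X := Su - uh with he
  have heV : e ∈ V := V.sub_mem (Submodule.orthogonalProjectionOnto V u).2 huhV
  have hortho : ⟪u - Su, e⟫ = 0 := V.starProjection_inner_eq_zero u e heV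
  have hproj : ⟪Su, e⟫ = ⟪u, e⟫ := by
    have := inner_sub_left (𝕜 := ℝ) u Su e
    rw [hortho] at this
    linarith
  have h1 : ⟪u, e⟫ = -⟪Du, ι e⟫ := hDu e
  have h2 : ν * ⟪uh, e⟫ = ⟪f, Pi e⟫ - (Real.sqrt α)⁻¹ * ⟪Pi zh, Pi e⟫ := by
    rw [huh e heV, inner_sub_left, real_inner_smul_left]
  have h3 : ⟪f, Pi e⟫ = -(ν * ⟪Du, Pi e⟫) + (Real.sqrt α)⁻¹ * ⟪ι z, Pi e⟫ := hf e heV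
  have hnorm : ‖e‖ ^ 2 = ⟪e, e⟫ := (real_inner_self_eq_norm_sq e).symm
  have hee : ⟪e, e⟫ = ⟪Su, e⟫ - ⟪uh, e⟫ := inner_sub_left Su uh e
  rw [hnorm, hee, inner_sub_right (𝕜 := ℝ) Du (ι e) (Pi e),
    inner_sub_left (𝕜 := ℝ) (ι z) (Pi zh) (Pi e)]
  linear_combination ν * hproj + ν * h1 - h2 - h3
end

section
/- Let X and L be real inner product spaces, ι : X → L and Π : X → L linear maps, V_h⁰ ⊆ X a complete subspace, and S_h : X → X the orthogonal projection onto V_h⁰. Fix ν > 0, α > 0 and u^d ∈ L. Let u, z ∈ X and Dz ∈ L satisfy ⟨z,φ⟩_X = −⟨Dz, ιφ⟩_L for all φ ∈ X and α^{-1/2}⟨ιu − u^d, Πφ_h⟩_L = −ν⟨Dz, Πφ_h⟩_L for all φ_h ∈ V_h⁰, and let u_h, z_h ∈ V_h⁰ satisfy ν⟨φ_h,z_h⟩_X = α^{-1/2}⟨Πu_h − u^d, Πφ_h⟩_L for all φ_h ∈ V_h⁰. Then, with e_z := S_h z − z_h, it holds ν‖e_z‖_X² = −ν⟨Dz, ιe_z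 − Πe_z⟩_L + α^{-1/2}⟨ιu − Πu_h, Πe_z⟩_L. -/
open RealInnerProductSpace

/-- Adjoint error identity in the proof of the a priori estimate for the fully
pressure-robust discretization of the Stokes optimal control problem. -/
theorem robust_adjoint_error_identity
    {X L : Type*} [NormedAddCommGroup X] [InnerProductSpace ℝ X]
    [NormedAddCommGroup L] [InnerProductSpace ℝ L]
    (ι : X →ₗ[ℝ] L) (Pi : X →ₗ[ℝ] L)
    (V : Submodule ℝ X) [CompleteSpace V]
    (ν α : ℝ) (hν : 0 < ν) (hα : 0 < α)
    (ud : L) (u z : X) (Dz : L)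
    (hDz : ∀ φ : X, ⟪z, φ⟫ = -⟪Dz, ι φ⟫)
    (hud : ∀ φh ∈ V,
      (Real.sqrt α)⁻¹ * ⟪ι u - ud, Pi φh⟫ = -(ν * ⟪Dz, Pi φh⟫))
    (uh zh : X) (huhV : uh ∈ V) (hzhV : zh ∈ V)
    (hzh : ∀ φh ∈ V,
      ν * ⟪φh, zh⟫ = (Real.sqrt α)⁻¹ * ⟪Pi uh - ud, Pi φh⟫) :
    ν * ‖(Submodule.orthogonalProjectionOnto V z : X) - zh‖ ^ 2
      = -(ν * ⟪Dz, ι ((Submodule.orthogonalProjectionOnto V z : X) - zh)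
            - Pi ((Submodule.orthogonalProjectionOnto V z : X) - zh)⟫)
        + (Real.sqrt α)⁻¹ * ⟪ι u - Pi uh, Pi ((Submodule.orthogonalProjectionOnto V z : X) - zh)⟫ := by
  set Sz : X := (Submodule.orthogonalProjectionOnto V z : X) with hSz
  set e : X := Sz - zh with he
  have heV : e ∈ V := V.sub_mem (Submodule.orthogonalProjectionOnto V z).2 hzhV
  have h1 : ⟪z - Sz, e⟫ = 0 :=
    (Submodule.mem_orthogonal' V _).mp (Submodule.sub_starProjection_mem_orthogonal (K := V) z) e heV
  rw [inner_sub_left, sub_eq_zero] at h1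
  have h3 := hDz e
  have h4 := hud e heV
  have h5 := hzh e heV
  have hee : ⟪e, e⟫ = ⟪Sz, e⟫ - ⟪zh, e⟫ := by rw [he, inner_sub_left]
  have hcomm : ⟪zh, e⟫ = ⟪e, zh⟫ := real_inner_comm _ _
  rw [← real_inner_self_eq_norm_sq]
  simp only [map_sub, inner_sub_left, inner_sub_right] at *
  linear_combination ν * hee - ν * hcomm - ν * h1 + ν * h3 - h5 - h4
end

section
/- Let X be a real inner product space, V⁰ ⊆ X a complete subspace, L a real inner product space, ι : X → L a continuous linear map, ν > 0, α > 0 and f, u^d ∈ L. Call a pair (u,q) ∈ V⁰ × L feasible if ν⟨u,φ⟩_X = ⟨f + q, ιφ⟩_L for all φ ∈ V⁰, and define J(v,r) := (1/2)‖ιv − u^d‖_L² + (α/2)‖r‖_L². Then a feasible pair (u,q) satisfies J(u,q) ≤ J(v,r) for all feasible pairs (v,r) if and only if there exists z ∈ V⁰ such that q = −α^{-1/2} ιz and ν⟨φ,z⟩_X − α^{-1/2}⟨ιu, ιφ⟩_L = −α^{-1/2}⟨u^d, ιφ⟩_L for all φ ∈ V⁰. -/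
/-!
The feasible pairs form the affine space `(u, q) + K`, where `K` is the graph of the
homogeneous Stokes solution operator, and the cost is a convex quadratic. Expanding
`J(u + d, q + e) = J(u, q) + (⟪ι u - u^d, ι d⟫ + α ⟪q, e⟫) + J₀(d, e)`, the pair `(u, q)`
is optimal iff the linear term vanishes on `K`. For the rescaled adjoint state `z` (the
Stokes solution with right-hand side `α^{-1/2} (ι u - u^d)`), symmetry of the Stokes form
turns that linear term into `α ⟪q + α^{-1/2} ι z, e⟫`; testing with `e = q + α^{-1/2} ι z`
shows it vanishes on `K` iff `q = -α^{-1/2} ι z`.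
-/

open RealInnerProductSpace

namespace StokesControl

variable {X L : Type*} [NormedAddCommGroup X] [InnerProductSpace ℝ X]
  [NormedAddCommGroup L] [InnerProductSpace ℝ L]

theorem exists_mem_forall_inner_eq (V : Submodule ℝ X) [CompleteSpace V] (ℓ : X →L[ℝ] ℝ) :
    ∃ z ∈ V, ∀ φ ∈ V, ⟪φ, z⟫ = ℓ φ := by
  set z : V := (InnerProductSpace.toDual ℝ V).symm (ℓ.comp V.subtypeL)
  refine ⟨z, z.2, fun φ hφ => ?_⟩
  rw [real_inner_comm, ← Submodule.coe_inner V z ⟨φ, hφ⟩, InnerProductSpace.toDual_symm_apply]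
  rfl

def IsStokesSolution (V : Submodule ℝ X) (ι : X →L[ℝ] L) (ν : ℝ) (v : X) (g : L) : Prop :=
  v ∈ V ∧ ∀ φ ∈ V, ν * ⟪v, φ⟫ = ⟪g, ι φ⟫

namespace IsStokesSolution

variable {V : Submodule ℝ X} {ι : X →L[ℝ] L} {ν : ℝ} {v w : X} {g h : L}

theorem add (hv : IsStokesSolution V ι ν v g) (hw : IsStokesSolution V ι ν w h) :
    IsStokesSolution V ι ν (v + w) (g + h) :=
  ⟨V.add_mem hv.1 hw.1, fun φ hφ => by
    rw [inner_add_left, inner_add_left, mul_add, hv.2 φ hφ, hw.2 φ hφ]⟩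

theorem sub (hv : IsStokesSolution V ι ν v g) (hw : IsStokesSolution V ι ν w h) :
    IsStokesSolution V ι ν (v - w) (g - h) :=
  ⟨V.sub_mem hv.1 hw.1, fun φ hφ => by
    rw [inner_sub_left, inner_sub_left, mul_sub, hv.2 φ hφ, hw.2 φ hφ]⟩

theorem smul (hv : IsStokesSolution V ι ν v g) (t : ℝ) :
    IsStokesSolution V ι ν (t • v) (t • g) :=
  ⟨V.smul_mem t hv.1, fun φ hφ => by
    rw [real_inner_smul_left, real_inner_smul_left, mul_left_comm, hv.2 φ hφ]⟩

end IsStokesSolution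

theorem exists_isStokesSolution (V : Submodule ℝ X) [CompleteSpace V] (ι : X →L[ℝ] L)
    {ν : ℝ} (hν : ν ≠ 0) (g : L) : ∃ v, IsStokesSolution V ι ν v g := by
  obtain ⟨v, hvV, hv⟩ := exists_mem_forall_inner_eq V (ν⁻¹ • (innerSL ℝ g).comp ι)
  refine ⟨v, hvV, fun φ hφ => ?_⟩
  rw [real_inner_comm, hv φ hφ]
  simp [hν]

noncomputable def trackingCost (ι : X →L[ℝ] L) (α : ℝ) (ud : L) (v : X) (r : L) : ℝ :=
  (1 / 2) * ‖ι v - ud‖ ^ 2 + (α / 2) * ‖r‖ ^ 2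

variable (ι : X →L[ℝ] L) {α : ℝ} (ud : L)

theorem trackingCost_add (u d : X) (q e : L) :
    trackingCost ι α ud (u + d) (q + e)
      = trackingCost ι α ud u q + (⟪ι u - ud, ι d⟫ + α * ⟪q, e⟫)
        + trackingCost ι α 0 d e := by
  have hsplit : ι (u + d) - ud = (ι u - ud) + ι d := by rw [map_add]; abel
  simp only [trackingCost, hsplit, sub_zero, norm_add_sq_real]
  ring

theorem trackingCost_smul (t : ℝ) (d : X) (e : L) :
    trackingCost ι α 0 (t • d) (t • e) = t ^ 2 * trackingCost ι α 0 d e := by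
  simp only [trackingCost, sub_zero, map_smul, norm_smul, mul_pow, Real.norm_eq_abs, sq_abs]
  ring

theorem trackingCost_zero_nonneg (hα : 0 ≤ α) (d : X) (e : L) :
    0 ≤ trackingCost ι α 0 d e := by
  unfold trackingCost
  positivity

variable {V : Submodule ℝ X} {ν : ℝ} {f q : L} {u : X}

theorem isMin_iff_forall_isStokesSolution (hα : 0 ≤ α)
    (hu : IsStokesSolution V ι ν u (f + q)) :
    (∀ v r, IsStokesSolution V ι ν v (f + r) →
        trackingCost ι α ud u q ≤ trackingCost ι α ud v r)
      ↔ ∀ d e, IsStokesSolution V ι ν d e → ⟪ι u - ud, ι d⟫ + α * ⟪q, e⟫ = 0 := by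
  constructor
  · intro hmin d e hde
    set G := ⟪ι u - ud, ι d⟫ + α * ⟪q, e⟫
    have hquad : ∀ t : ℝ, 0 ≤ trackingCost ι α 0 d e * (t * t) + G * t + 0 := fun t => by
      have hfeas : IsStokesSolution V ι ν (u + t • d) (f + (q + t • e)) := by
        simpa [add_assoc] using hu.add (hde.smul t)
      have h := hmin _ _ hfeas
      rw [trackingCost_add, trackingCost_smul] at h
      simp only [map_smul, real_inner_smul_right] at h
      linarith
    have hG := discrim_le_zero hquad
    rw [discrim, mul_zero, sub_zero] at hG
    exact pow_eq_zero_iff two_ne_zero |>.mp (le_antisymm hG (sq_nonneg G))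
  · intro hcrit v r hv
    have hdir := hcrit (v - u) (r - q) (by simpa using hv.sub hu)
    have hcost := trackingCost_add ι (α := α) ud u (v - u) q (r - q)
    rw [add_sub_cancel, add_sub_cancel, hdir, add_zero] at hcost
    rw [hcost]
    exact le_add_of_nonneg_right (trackingCost_zero_nonneg ι hα _ _)

variable {s : ℝ} {g : L}

theorem first_variation_eq (hs : α * s ^ 2 = 1) {z d : X} {e : L}
    (hz : IsStokesSolution V ι ν z (s • g)) (hde : IsStokesSolution V ι ν d e) :
    ⟪g, ι d⟫ + α * ⟪q, e⟫ = α * ⟪q + s • ι z, e⟫ := by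
  have hsym : s * ⟪g, ι d⟫ = ⟪e, ι z⟫ := by
    rw [← real_inner_smul_left, ← hz.2 d hde.1, ← hde.2 z hz.1, real_inner_comm]
  rw [inner_add_left, real_inner_smul_left, real_inner_comm e (ι z)]
  linear_combination (-⟪g, ι d⟫) * hs + (α * s) * hsym

theorem forall_isStokesSolution_iff_exists_adjoint [CompleteSpace V] (hν : ν ≠ 0)
    (hα : 0 < α) (hs : α * s ^ 2 = 1) :
    (∀ d e, IsStokesSolution V ι ν d e → ⟪g, ι d⟫ + α * ⟪q, e⟫ = 0)
      ↔ ∃ z, IsStokesSolution V ι ν z (s • g) ∧ q = -s • ι z := by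
  constructor
  · intro hcrit
    obtain ⟨z, hz⟩ := exists_isStokesSolution V ι hν (s • g)
    obtain ⟨d, hd⟩ := exists_isStokesSolution V ι hν (q + s • ι z)
    have hgrad : α * ⟪q + s • ι z, q + s • ι z⟫ = 0 := by
      rw [← first_variation_eq ι hs hz hd, hcrit d _ hd]
    have hzero : q + s • ι z = 0 :=
      inner_self_eq_zero.mp ((mul_eq_zero.mp hgrad).resolve_left hα.ne')
    exact ⟨z, hz, by rw [neg_smul]; exact eq_neg_of_add_eq_zero_left hzero⟩
  · rintro ⟨z, hz, rfl⟩ d e hde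
    rw [first_variation_eq ι hs hz hde, neg_smul, neg_add_cancel, inner_zero_left, mul_zero]

end StokesControl

open StokesControl in
/-- Equivalence of the canonical Stokes optimal control problem with its
rescaled first-order optimality (KKT) system. -/
theorem optimal_iff_kkt
    {X L : Type*} [NormedAddCommGroup X] [InnerProductSpace ℝ X]
    [NormedAddCommGroup L] [InnerProductSpace ℝ L]
    (V : Submodule ℝ X) [CompleteSpace V]
    (ι : X →L[ℝ] L)
    (ν α : ℝ) (hν : 0 < ν) (hα : 0 < α) (f ud : L)
    (u : X) (q : L) (huV : u ∈ V)
    (hfeas : ∀ φ ∈ V, ν * ⟪u, φ⟫ = ⟪f + q, ι φ⟫) :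
    (∀ (v : X) (r : L), v ∈ V → (∀ φ ∈ V, ν * ⟪v, φ⟫ = ⟪f + r, ι φ⟫) →
        (1 / 2) * ‖ι u - ud‖ ^ 2 + (α / 2) * ‖q‖ ^ 2
          ≤ (1 / 2) * ‖ι v - ud‖ ^ 2 + (α / 2) * ‖r‖ ^ 2)
      ↔ ∃ z ∈ V, q = -(Real.sqrt α)⁻¹ • ι z ∧
          ∀ φ ∈ V, ν * ⟪φ, z⟫ - (Real.sqrt α)⁻¹ * ⟪ι u, ι φ⟫
            = -(Real.sqrt α)⁻¹ * ⟪ud, ι φ⟫ := by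
  set s := (Real.sqrt α)⁻¹
  have hs : α * s ^ 2 = 1 := by rw [inv_pow, Real.sq_sqrt hα.le, mul_inv_cancel₀ hα.ne']
  have hadjoint : ∀ z, IsStokesSolution V ι ν z (s • (ι u - ud)) ↔ z ∈ V ∧ ∀ φ ∈ V,
      ν * ⟪φ, z⟫ - s * ⟪ι u, ι φ⟫ = -s * ⟪ud, ι φ⟫ := fun z => by
    refine and_congr_right fun _ => forall₂_congr fun φ _ => ?_
    rw [real_inner_comm, real_inner_smul_left, inner_sub_left]
    constructor <;> intro h <;> linarith
  have hu : IsStokesSolution V ι ν u (f + q) := ⟨huV, hfeas⟩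
  have hmin := isMin_iff_forall_isStokesSolution ι ud hα.le hu
  rw [forall_isStokesSolution_iff_exists_adjoint ι hν.ne' hα hs] at hmin
  simp only [hadjoint, and_assoc] at hmin
  refine Iff.trans ?_ (hmin.trans (exists_congr fun z => and_congr_right fun _ => and_comm))
  exact forall₂_congr fun v r => ⟨fun h hv => h hv.1 hv.2, fun h hv hφ => h ⟨hv, hφ⟩⟩
end

section
/- Let X be a real inner product space, V⁰ ⊆ X a complete subspace, L a real Hilbert space, ι : X → L a continuous linear map, ν > 0, α > 0 and f, u^d ∈ L. Call a pair (u,q) ∈ V⁰ × L feasible if ν⟨u,φ⟩_X = ⟨f + q, ιφ⟩_L for all φ ∈ V⁰, and define J(v,r) := (1/2)‖ιv − u^d‖_L² + (α/2)‖r‖_L². Then there exists exactly one feasible pair (u,q) such that J(u,q) ≤ J(v,r) for all feasible pairs (v,r). -/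
open RealInnerProductSpace

set_option maxHeartbeats 1000000

noncomputable section StokesAux

set_option linter.unusedSectionVars false

variable {X L : Type*} [NormedAddCommGroup X] [InnerProductSpace ℝ X]
  [NormedAddCommGroup L] [InnerProductSpace ℝ L] [CompleteSpace L]
  (V : Submodule ℝ X) [CompleteSpace V] (ι : X →L[ℝ] L) (ν : ℝ)

/-- The Riesz solution of the state equation. -/
def stokesSol (q : L) : V :=
  (InnerProductSpace.toDual ℝ V).symm (ν⁻¹ • ((innerSL ℝ q).comp (ι.comp V.subtypeL)))

lemma stokesSol_inner (q : L) {φ : X} (hφ : φ ∈ V) :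
    ⟪(stokesSol V ι ν q : X), φ⟫ = ν⁻¹ * ⟪q, ι φ⟫ := by
  have := InnerProductSpace.toDual_symm_apply (𝕜 := ℝ) (E := V)
    (x := (⟨φ, hφ⟩ : V)) (y := ν⁻¹ • ((innerSL ℝ q).comp (ι.comp V.subtypeL)))
  simpa [stokesSol, Submodule.coe_inner] using this

lemma stokesSol_spec (hν : ν ≠ 0) (q : L) {φ : X} (hφ : φ ∈ V) :
    ν * ⟪(stokesSol V ι ν q : X), φ⟫ = ⟪q, ι φ⟫ := by
  rw [stokesSol_inner V ι ν q hφ]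
  field_simp

lemma stokesSol_unique (hν : ν ≠ 0) {u : X} (hu : u ∈ V) {q : L}
    (h : ∀ φ ∈ V, ν * ⟪u, φ⟫ = ⟪q, ι φ⟫) : u = ↑(stokesSol V ι ν q) := by
  set w : X := u - ↑(stokesSol V ι ν q) with hw
  have hwV : w ∈ V := V.sub_mem hu (stokesSol V ι ν q).2
  have hzero : ν * ⟪w, w⟫ = 0 := by
    have h1 := h w hwV
    have h2 := stokesSol_spec V ι ν hν q hwV
    rw [hw, inner_sub_left] at *
    ring_nf
    ring_nf at h1 h2
    linarith
  have hinner : ⟪w, w⟫ = 0 := by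
    rcases mul_eq_zero.mp hzero with h' | h'
    · exact absurd h' hν
    · exact h'
  have hw0 : w = 0 := by rwa [inner_self_eq_zero] at hinner
  exact sub_eq_zero.mp (hw ▸ hw0)

lemma stokesSol_add (hν : ν ≠ 0) (q q' : L) :
    stokesSol V ι ν (q + q') = stokesSol V ι ν q + stokesSol V ι ν q' := by
  have key : ((stokesSol V ι ν q : X) + ↑(stokesSol V ι ν q'))
      = ↑(stokesSol V ι ν (q + q')) := by
    refine stokesSol_unique V ι ν hν (V.add_mem (stokesSol V ι ν q).2 (stokesSol V ι ν q').2) ?_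
    intro φ hφ
    rw [inner_add_left, mul_add, stokesSol_spec V ι ν hν q hφ,
      stokesSol_spec V ι ν hν q' hφ, inner_add_left]
  exact Subtype.ext (by rw [Submodule.coe_add]; exact key.symm)

lemma stokesSol_smul (hν : ν ≠ 0) (a : ℝ) (q : L) :
    stokesSol V ι ν (a • q) = a • stokesSol V ι ν q := by
  have key : (a • (stokesSol V ι ν q : X)) = ↑(stokesSol V ι ν (a • q)) := by
    refine stokesSol_unique V ι ν hν (V.smul_mem a (stokesSol V ι ν q).2) ?_
    intro φ hφ
    rw [real_inner_smul_left, real_inner_smul_left]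
    rw [show ν * (a * ⟪(stokesSol V ι ν q : X), φ⟫) = a * (ν * ⟪(stokesSol V ι ν q : X), φ⟫)
      from by ring, stokesSol_spec V ι ν hν q hφ]
  exact Subtype.ext (by rw [Submodule.coe_smul]; exact key.symm)

lemma stokesSol_norm_le (q : L) :
    ‖stokesSol V ι ν q‖ ≤ (|ν⁻¹| * ‖ι.comp V.subtypeL‖) * ‖q‖ := by
  rw [stokesSol, LinearIsometryEquiv.norm_map, norm_smul, Real.norm_eq_abs]
  calc |ν⁻¹| * ‖(innerSL ℝ q).comp (ι.comp V.subtypeL)‖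
      ≤ |ν⁻¹| * (‖innerSL ℝ q‖ * ‖ι.comp V.subtypeL‖) := by
        gcongr
        exact ContinuousLinearMap.opNorm_comp_le _ _
    _ = (|ν⁻¹| * ‖ι.comp V.subtypeL‖) * ‖q‖ := by rw [innerSL_apply_norm]; ring

/-- The solution operator as a continuous linear map. -/
def stokesT (hν : ν ≠ 0) : L →L[ℝ] V :=
  LinearMap.mkContinuous
    { toFun := stokesSol V ι ν
      map_add' := stokesSol_add V ι ν hν
      map_smul' := stokesSol_smul V ι ν hν }
    (|ν⁻¹| * ‖ι.comp V.subtypeL‖) (stokesSol_norm_le V ι ν)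

lemma stokesT_apply (hν : ν ≠ 0) (q : L) : stokesT V ι ν hν q = stokesSol V ι ν q := rfl

end StokesAux

/-- Existence and uniqueness of the optimal pair for the canonical Stokes
optimal control problem. -/
theorem optimal_pair_exists_unique
    {X L : Type*} [NormedAddCommGroup X] [InnerProductSpace ℝ X]
    [NormedAddCommGroup L] [InnerProductSpace ℝ L] [CompleteSpace L]
    (V : Submodule ℝ X) [CompleteSpace V]
    (ι : X →L[ℝ] L)
    (ν α : ℝ) (hν : 0 < ν) (hα : 0 < α) (f ud : L) :
    ∃! p : X × L,
      (p.1 ∈ V ∧ ∀ φ ∈ V, ν * ⟪p.1, φ⟫ = ⟪f + p.2, ι φ⟫) ∧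
        ∀ (v : X) (r : L), v ∈ V → (∀ φ ∈ V, ν * ⟪v, φ⟫ = ⟪f + r, ι φ⟫) →
          (1 / 2) * ‖ι p.1 - ud‖ ^ 2 + (α / 2) * ‖p.2‖ ^ 2
            ≤ (1 / 2) * ‖ι v - ud‖ ^ 2 + (α / 2) * ‖r‖ ^ 2 := by
  have hν' : ν ≠ 0 := ne_of_gt hν
  set T := stokesT V ι ν hν' with hTdef
  set A := (ι.comp V.subtypeL).comp T with hAdef
  have hA : ∀ r : L, A r = ι ↑(stokesSol V ι ν r) := fun r => rfl
  set c := ud - A f with hc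
  obtain ⟨B, hB⟩ : ∃ B : L →L[ℝ] L →L[ℝ] ℝ, ∀ p h : L,
      B p h = ⟪A p, A h⟫ + α * ⟪p, h⟫ := by
    refine ⟨(innerSL ℝ).comp ((ContinuousLinearMap.adjoint A).comp A
      + α • ContinuousLinearMap.id ℝ L), fun p h => ?_⟩
    simp only [ContinuousLinearMap.comp_apply, innerSL_apply_apply,
      ContinuousLinearMap.add_apply, ContinuousLinearMap.smul_apply,
      ContinuousLinearMap.coe_id', id_eq, inner_add_left, real_inner_smul_left,
      ContinuousLinearMap.adjoint_inner_left]
  have coercive : IsCoercive B := by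
    refine ⟨α, hα, fun u => ?_⟩
    rw [hB]
    have h1 : (0:ℝ) ≤ ⟪A u, A u⟫ := real_inner_self_nonneg
    have h2 : ⟪u, u⟫ = ‖u‖ * ‖u‖ := real_inner_self_eq_norm_mul_norm u
    nlinarith
  obtain ⟨q, hnormal⟩ : ∃ q : L, ∀ h : L, ⟪A q - c, A h⟫ + α * ⟪q, h⟫ = 0 := by
    refine ⟨coercive.continuousLinearEquivOfBilin.symm (ContinuousLinearMap.adjoint A c),
      fun h => ?_⟩
    set q' := coercive.continuousLinearEquivOfBilin.symm (ContinuousLinearMap.adjoint A c)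
      with hqdef
    have h1 : ⟪coercive.continuousLinearEquivOfBilin q', h⟫ = B q' h :=
      coercive.continuousLinearEquivOfBilin_apply q' h
    rw [hqdef, ContinuousLinearEquiv.apply_symm_apply,
      ContinuousLinearMap.adjoint_inner_left] at h1
    rw [hB] at h1
    rw [inner_sub_left]
    linarith
  have hAsplit : ∀ r : L, ι ↑(stokesSol V ι ν (f + r)) - ud = A r - c := by
    intro r
    rw [← hA, map_add, hc]
    abel
  have keyineq : ∀ r : L,
      (1/2)*‖A q - c‖^2 + (α/2)*‖q‖^2 + (α/2)*‖r - q‖^2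
        ≤ (1/2)*‖A r - c‖^2 + (α/2)*‖r‖^2 := by
    intro r
    have hh : A r - c = (A q - c) + A (r - q) := by rw [map_sub]; abel
    have e1 : ‖A r - c‖^2 = ‖A q - c‖^2 + 2*⟪A q - c, A (r-q)⟫ + ‖A (r-q)‖^2 := by
      rw [hh, norm_add_sq_real]
    have e2 : ‖r‖^2 = ‖q‖^2 + 2*⟪q, r-q⟫ + ‖r-q‖^2 := by
      conv_lhs => rw [show r = q + (r - q) by abel]
      rw [norm_add_sq_real]
    have e3 := hnormal (r - q)
    have e4 : (0:ℝ) ≤ ‖A (r-q)‖^2 := sq_nonneg _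
    nlinarith [e1, e2, e3, e4]
  refine ⟨((stokesSol V ι ν (f + q) : X), q), ⟨⟨(stokesSol V ι ν (f + q)).2,
    fun φ hφ => stokesSol_spec V ι ν hν' (f + q) hφ⟩, ?_⟩, ?_⟩
  · intro v r hv h
    have hv' := stokesSol_unique V ι ν hν' hv h
    simp only
    rw [hv', hAsplit r, hAsplit q]
    have h1 := keyineq r
    have h2 : (0:ℝ) ≤ (α/2)*‖r - q‖^2 := by positivity
    linarith
  · rintro ⟨v, r⟩ ⟨⟨hv, hfeasv⟩, hopt⟩
    have hv' := stokesSol_unique V ι ν hν' hv hfeasv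
    simp only at hv'
    have h1 := hopt ↑(stokesSol V ι ν (f + q)) q (stokesSol V ι ν (f + q)).2
      (fun φ hφ => stokesSol_spec V ι ν hν' (f + q) hφ)
    simp only at h1
    rw [hv', hAsplit r, hAsplit q] at h1
    have h2 := keyineq r
    have hrq : r = q := by
      have h3 : (α/2)*‖r - q‖^2 ≤ 0 := by linarith
      have h4 : (0:ℝ) ≤ ‖r - q‖^2 := sq_nonneg _
      have h5 : ‖r - q‖^2 = 0 := by nlinarith
      have h6 : ‖r - q‖ = 0 := by
        have := sq_eq_zero_iff.mp h5
        exact this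
      exact sub_eq_zero.mp (norm_eq_zero.mp h6)
    subst hrq
    exact Prod.ext hv' rfl
end

section
/- Let X be a real inner product space, V_h⁰ ⊆ X a complete subspace, L a real inner product space, Π : X → L a continuous linear map, ν > 0, α > 0 and f, u^d ∈ L. Call a pair (u_h,q) ∈ V_h⁰ × L feasible if ν⟨u_h,φ_h⟩_X = ⟨f + q, Πφ_h⟩_L for all φ_h ∈ V_h⁰, and define J_Π(v,r) := (1/2)‖Πv − u^d‖_L² + (α/2)‖r‖_L². Then a feasible pair (u_h,q) satisfies J_Π(u_h,q) ≤ J_Π(v,r) for all feasible pairs (v,r) if and only if there exists z_h ∈ V_h⁰ such that q = −α^{-1/2} Πz_h and ν⟨φ_h,z_h⟩_X = α^{-1/2}⟨Πu_h − u^d, Πφ_h⟩_L for all φ_h ∈ V_h⁰. -/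
/-!
The feasible pairs form the affine space `(u_h, q) + D`, where `D` is the space of solutions of the
homogeneous discrete state equation, and `J_Π` is a quadratic with nonnegative second variation
along `D`. So `(u_h, q)` is optimal iff the first variation
`d ↦ ⟨Π u_h - u^d, Π d₁⟩ + α ⟨q, d₂⟩` vanishes on `D`. Testing the adjoint equation with `d₁` and
the state equation of `d` with `z_h` turns the first variation into `⟨√α Π z_h + α q, d₂⟩`, and since
every control `d₂` has a state `d₁` (Riesz on `V`), it vanishes iff `√α Π z_h + α q = 0`.
-/

open RealInnerProductSpace

theorem forall_le_add_iff_of_eq_add_mul_add_sq_mul {E : Type*} [AddCommGroup E] [Module ℝ E]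
    (D : Submodule ℝ E) {J ℓ Q : E → ℝ} {x : E}
    (hJ : ∀ d ∈ D, ∀ t : ℝ, J (x + t • d) = J x + t * ℓ d + t ^ 2 * Q d)
    (hQ : ∀ d ∈ D, 0 ≤ Q d) :
    (∀ d ∈ D, J x ≤ J (x + d)) ↔ ∀ d ∈ D, ℓ d = 0 := by
  constructor
  · intro hmin d hd
    have hquad : ∀ t : ℝ, 0 ≤ Q d * (t * t) + ℓ d * t + 0 := fun t => by
      have := hmin (t • d) (D.smul_mem t hd)
      rw [hJ d hd t] at this
      nlinarith
    have := discrim_le_zero hquad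
    rw [discrim] at this
    nlinarith [sq_nonneg (ℓ d)]
  · intro hℓ d hd
    have := hJ d hd 1
    rw [one_smul] at this
    rw [this, hℓ d hd]
    linarith [hQ d hd]

theorem Submodule.exists_mem_forall_inner_eq {𝕜 X : Type*} [RCLike 𝕜] [NormedAddCommGroup X]
    [InnerProductSpace 𝕜 X] (V : Submodule 𝕜 X) [CompleteSpace V] (F : X →L[𝕜] 𝕜) :
    ∃ z ∈ V, ∀ φ ∈ V, inner 𝕜 z φ = F φ := by
  refine ⟨_, ((InnerProductSpace.toDual 𝕜 V).symm (F.comp V.subtypeL)).2, fun φ hφ => ?_⟩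
  exact InnerProductSpace.toDual_symm_apply (x := (⟨φ, hφ⟩ : V))

theorem norm_add_smul_sq_real {F : Type*} [NormedAddCommGroup F] [InnerProductSpace ℝ F]
    (x y : F) (t : ℝ) : ‖x + t • y‖ ^ 2 = ‖x‖ ^ 2 + 2 * t * ⟪x, y⟫ + t ^ 2 * ‖y‖ ^ 2 := by
  rw [norm_add_sq_real, real_inner_smul_right, norm_smul, mul_pow, Real.norm_eq_abs, sq_abs]
  ring

namespace DiscreteStokesControl

variable {X L : Type*} [NormedAddCommGroup X] [InnerProductSpace ℝ X]
  [NormedAddCommGroup L] [InnerProductSpace ℝ L]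

def stateSolutions (V : Submodule ℝ X) (Pi : X →L[ℝ] L) (ν : ℝ) : Submodule ℝ (X × L) where
  carrier := {d | d.1 ∈ V ∧ ∀ φ ∈ V, ν * ⟪d.1, φ⟫ = ⟪d.2, Pi φ⟫}
  zero_mem' := ⟨V.zero_mem, fun φ _ => by simp⟩
  add_mem' := fun ⟨hV, h⟩ ⟨hV', h'⟩ => ⟨V.add_mem hV hV', fun φ hφ => by
    simp only [Prod.fst_add, Prod.snd_add, inner_add_left, mul_add, h φ hφ, h' φ hφ]⟩
  smul_mem' := fun c _ ⟨hV, h⟩ => ⟨V.smul_mem c hV, fun φ hφ => by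
    simp only [Prod.smul_fst, Prod.smul_snd, real_inner_smul_left, ← h φ hφ]
    ring⟩

noncomputable def cost (Pi : X →L[ℝ] L) (α : ℝ) (ud : L) (p : X × L) : ℝ :=
  (1 / 2) * ‖Pi p.1 - ud‖ ^ 2 + (α / 2) * ‖p.2‖ ^ 2

theorem cost_add_smul (Pi : X →L[ℝ] L) (α : ℝ) (ud : L) (p d : X × L) (t : ℝ) :
    cost Pi α ud (p + t • d) = cost Pi α ud p
      + t * (⟪Pi p.1 - ud, Pi d.1⟫ + α * ⟪p.2, d.2⟫) + t ^ 2 * cost Pi α 0 d := by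
  have hstate : Pi (p + t • d).1 - ud = (Pi p.1 - ud) + t • Pi d.1 := by
    rw [Prod.fst_add, Prod.smul_fst, map_add, map_smul]
    abel
  simp only [cost, hstate, Prod.snd_add, Prod.smul_snd, sub_zero, norm_add_smul_sq_real]
  ring

theorem cost_nonneg (Pi : X →L[ℝ] L) {α : ℝ} (hα : 0 ≤ α) (ud : L) (p : X × L) :
    0 ≤ cost Pi α ud p := by
  unfold cost
  positivity

variable {V : Submodule ℝ X} {Pi : X →L[ℝ] L} {ν : ℝ}

theorem forall_feasible_iff {f : L} {uh : X} {q : L} (huhV : uh ∈ V)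
    (hfeas : ∀ φ ∈ V, ν * ⟪uh, φ⟫ = ⟪f + q, Pi φ⟫) {P : X → L → Prop} :
    (∀ (v : X) (r : L), v ∈ V → (∀ φ ∈ V, ν * ⟪v, φ⟫ = ⟪f + r, Pi φ⟫) → P v r)
      ↔ ∀ d ∈ stateSolutions V Pi ν, P (uh + d.1) (q + d.2) := by
  constructor
  · rintro hP ⟨w, s⟩ ⟨hwV, hws⟩
    refine hP _ _ (V.add_mem huhV hwV) fun φ hφ => ?_
    simp only [inner_add_left, mul_add, hfeas φ hφ, hws φ hφ, ← add_assoc]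
  · intro hP v r hvV hvr
    have hd : (v - uh, r - q) ∈ stateSolutions V Pi ν :=
      ⟨V.sub_mem hvV huhV, fun φ hφ => by
        simp only [inner_sub_left, mul_sub, hvr φ hφ, hfeas φ hφ, inner_add_left]
        ring⟩
    simpa using hP _ hd

theorem exists_mk_mem_stateSolutions [CompleteSpace V] (hν : ν ≠ 0) (s : L) :
    ∃ w, (w, s) ∈ stateSolutions V Pi ν := by
  obtain ⟨w, hwV, hw⟩ := V.exists_mem_forall_inner_eq (ν⁻¹ • (innerSL ℝ s).comp Pi)
  refine ⟨w, hwV, fun φ hφ => ?_⟩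
  rw [hw φ hφ, smul_apply, smul_eq_mul, mul_inv_cancel_left₀ hν]
  rfl

theorem mul_inner_eq_inner_of_adjoint {z : X} {y : L} {c : ℝ} (hzV : z ∈ V)
    (hadj : ∀ φ ∈ V, ν * ⟪φ, z⟫ = c * ⟪y, Pi φ⟫) {d : X × L} (hd : d ∈ stateSolutions V Pi ν) :
    c * ⟪y, Pi d.1⟫ = ⟪Pi z, d.2⟫ := by
  rw [← hadj d.1 hd.1, hd.2 z hzV, real_inner_comm]

theorem forall_inner_snd_eq_zero_iff [CompleteSpace V] (hν : ν ≠ 0) (g : L) :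
    (∀ d ∈ stateSolutions V Pi ν, ⟪g, d.2⟫ = 0) ↔ g = 0 := by
  refine ⟨fun h => ?_, fun hg d _ => by rw [hg, inner_zero_left]⟩
  obtain ⟨w, hw⟩ := exists_mk_mem_stateSolutions (V := V) (Pi := Pi) hν g
  exact inner_self_eq_zero.mp (h _ hw)

theorem first_variation_eq_zero_iff [CompleteSpace V] (hν : ν ≠ 0) {α : ℝ} (hα : 0 < α)
    {ud : L} {uh z : X} {q : L} (hzV : z ∈ V)
    (hadj : ∀ φ ∈ V, ν * ⟪φ, z⟫ = (Real.sqrt α)⁻¹ * ⟪Pi uh - ud, Pi φ⟫) :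
    (∀ d ∈ stateSolutions V Pi ν, ⟪Pi uh - ud, Pi d.1⟫ + α * ⟪q, d.2⟫ = 0)
      ↔ q = -(Real.sqrt α)⁻¹ • Pi z := by
  have hsα : Real.sqrt α ≠ 0 := (Real.sqrt_pos.mpr hα).ne'
  have hαsα : α = Real.sqrt α * Real.sqrt α := (Real.mul_self_sqrt hα.le).symm
  have hvariation : ∀ d ∈ stateSolutions V Pi ν, ⟪Pi uh - ud, Pi d.1⟫ + α * ⟪q, d.2⟫
      = ⟪Real.sqrt α • (Pi z + Real.sqrt α • q), d.2⟫ := fun d hd => by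
    rw [real_inner_smul_left, inner_add_left, real_inner_smul_left,
      ← mul_inner_eq_inner_of_adjoint hzV hadj hd, mul_add, mul_inv_cancel_left₀ hsα, ← mul_assoc,
      ← hαsα]
  rw [forall_congr' fun d => forall_congr' fun hd => by rw [hvariation d hd],
    forall_inner_snd_eq_zero_iff hν, smul_eq_zero_iff_right hsα, add_eq_zero_iff_neg_eq,
    eq_comm, neg_smul, ← smul_neg, eq_inv_smul_iff₀ hsα]

end DiscreteStokesControl

open DiscreteStokesControl

/-- Equivalence of the fully pressure-robust discretized optimal control
problem with its rescaled discrete optimality system. -/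
theorem discrete_optimal_iff_kkt
    {X L : Type*} [NormedAddCommGroup X] [InnerProductSpace ℝ X]
    [NormedAddCommGroup L] [InnerProductSpace ℝ L]
    (V : Submodule ℝ X) [CompleteSpace V]
    (Pi : X →L[ℝ] L)
    (ν α : ℝ) (hν : 0 < ν) (hα : 0 < α) (f ud : L)
    (uh : X) (q : L) (huhV : uh ∈ V)
    (hfeas : ∀ φh ∈ V, ν * ⟪uh, φh⟫ = ⟪f + q, Pi φh⟫) :
    (∀ (v : X) (r : L), v ∈ V → (∀ φh ∈ V, ν * ⟪v, φh⟫ = ⟪f + r, Pi φh⟫) →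
        (1 / 2) * ‖Pi uh - ud‖ ^ 2 + (α / 2) * ‖q‖ ^ 2
          ≤ (1 / 2) * ‖Pi v - ud‖ ^ 2 + (α / 2) * ‖r‖ ^ 2)
      ↔ ∃ zh ∈ V, q = -(Real.sqrt α)⁻¹ • Pi zh ∧
          ∀ φh ∈ V, ν * ⟪φh, zh⟫
            = (Real.sqrt α)⁻¹ * ⟪Pi uh - ud, Pi φh⟫ := by
  refine (forall_feasible_iff (P := fun v r => cost Pi α ud (uh, q) ≤ cost Pi α ud (v, r))
    huhV hfeas).trans ?_
  refine (forall_le_add_iff_of_eq_add_mul_add_sq_mul (stateSolutions V Pi ν)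
    (fun d _ t => cost_add_smul Pi α ud (uh, q) d t) (fun d _ => cost_nonneg Pi hα.le 0 d)).trans ?_
  obtain ⟨z, hz⟩ := exists_mk_mem_stateSolutions (V := V) (Pi := Pi) hν.ne'
    ((Real.sqrt α)⁻¹ • (Pi uh - ud))
  have hadj : ∀ φ ∈ V, ν * ⟪φ, z⟫ = (Real.sqrt α)⁻¹ * ⟪Pi uh - ud, Pi φ⟫ := fun φ hφ => by
    rw [real_inner_comm, hz.2 φ hφ, real_inner_smul_left]
  constructor
  · intro hvariation
    exact ⟨z, hz.1, (first_variation_eq_zero_iff hν.ne' hα hz.1 hadj).mp hvariation, hadj⟩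
  · rintro ⟨zh, hzhV, hq, hadjzh⟩
    exact (first_variation_eq_zero_iff hν.ne' hα hzhV hadjzh).mpr hq
end
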